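/- Let t+3 ≤ k ≤ 2t+2 with (k,t) ≠ (4,1), and n ≥ 2L(k,t), where L(k,t) = (t+1) + (k-t+1)·log₂((t+1)(k-t+1)). Then (t+2)·S(n-t-1, k-t-1) − (t+1)·S(n-t-2, k-t-2) > Σ_{j=1}^{k-t} (−1)^{j−1}·C(k-t,j)·S(n-t-j, k-t-j) + t; that is, |A(n,k,t)| > |H(n,k,t)|. Moreover, if (k,t) = (4,1) the two quantities are equal, both being 3·S(n-2,2) − 2. -/

import Mathlib

/-- Stirling numbers of the second kind. -/
def stirling : ℕ → ℕ → ℕ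
  | 0, 0 => 1
  | 0, _ + 1 => 0
  | _ + 1, 0 => 0
  | n + 1, k + 1 => stirling n k + (k + 1) * stirling n (k + 1)

/-- The threshold function `L(k,t) = (t+1) + (k-t+1)·log₂((t+1)(k-t+1))`. -/
noncomputable def Lkt (k t : ℕ) : ℝ :=
  ((t : ℝ) + 1) + ((k : ℝ) - t + 1) * Real.logb 2 (((t : ℝ) + 1) * ((k : ℝ) - t + 1))

/-!
Write `r = k - t`, `g = n - k` and `Sᵢ = S(r + g - i, r - i)`. Sorting the maps `[N] → [K]` by their
partition into fibres gives `K ^ N = ∑ⱼ S(N, j) · K(K-1)⋯(K-j+1)`, hence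
`K ^ N - K (K - 1) ^ N ≤ K! S(N, K) ≤ K ^ N`; together with `(a + 1) ^ a ≥ 2 a ^ a` this yields
`S(a + 1 + g, a + 1) ≥ c · S(a + g, a)` whenever `(c + a) ^ a ≤ 2 ^ g`. The bound `n ≥ 2 L(k,t)`
provides this for all `c + a ≤ (t + 1)(r + 1)`. So the terms `C(r, j) Sⱼ` decrease in `j` and the
alternating sum is at most `r S₁ - C(r,2) S₂ + C(r,3) S₃`. If `r ≤ t + 1`, the ratio
`S₁ ≥ (2t + 2) S₂` wins. If `r = t + 2`, the claim becomes `C(r-1,2) S₂ > C(r,3) S₃ + t`, which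
follows from `S₂ ≥ r S₃` and `r C(r-1,2) = 3 C(r,3)` once `r ≥ 4`; for `r = 3`, i.e. `(k,t) = (4,1)`,
`S₂ = 1`, `S₃ = 0` and the two sides are equal.
-/

open Finset

theorem stirling_eq_stirlingSecond : stirling = Nat.stirlingSecond := by
  funext n k
  induction n generalizing k with
  | zero => cases k <;> rfl
  | succ n ih =>
    cases k with
    | zero => rfl
    | succ k => rw [stirling, Nat.stirlingSecond_succ_succ, ih, ih, add_comm]

namespace Nat

theorem stirlingSecond_pos {n k : ℕ} (hk : 1 ≤ k) (hkn : k ≤ n) : 0 < stirlingSecond n k := by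
  induction n generalizing k with
  | zero => omega
  | succ n ih =>
    obtain ⟨k, rfl⟩ := Nat.exists_eq_add_of_le' hk
    rw [stirlingSecond_succ_succ]
    rcases (show k + 1 ≤ n ∨ k = n by omega) with hkn | rfl
    · have := ih le_add_self hkn
      positivity
    · simp [stirlingSecond_self]

theorem sum_stirlingSecond_mul_descFactorial (N K : ℕ) :
    ∑ j ∈ range (K + 1), stirlingSecond N j * K.descFactorial j = K ^ N := by
  induction N with
  | zero => simp [sum_range_succ']
  | succ N ih =>
    have hstep : ∀ j, K.descFactorial j * K = K.descFactorial (j + 1) + j * K.descFactorial j := by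
      intro j
      rcases le_or_gt j K with hj | hj
      · rw [descFactorial_succ, ← add_mul, Nat.sub_add_cancel hj, mul_comm]
      · simp [descFactorial_eq_zero_iff_lt.2 hj]
    rw [pow_succ, ← ih, sum_mul]
    simp only [mul_assoc, hstep, mul_add, sum_add_distrib]
    rw [sum_range_succ' (fun j => stirlingSecond (N + 1) j * _),
      sum_range_succ (fun j => stirlingSecond N j * K.descFactorial (j + 1)),
      sum_range_succ' (fun j => stirlingSecond N j * (j * _))]
    simp only [stirlingSecond_succ_succ, stirlingSecond_succ_zero,
      descFactorial_eq_zero_iff_lt.2 (lt_add_one K), mul_zero, zero_mul, add_zero,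
      ← sum_add_distrib]
    exact sum_congr rfl fun j _ => by ring

theorem factorial_mul_stirlingSecond_le_pow (N K : ℕ) : K ! * stirlingSecond N K ≤ K ^ N := by
  rw [← sum_stirlingSecond_mul_descFactorial N K, sum_range_succ, descFactorial_self, mul_comm]
  exact le_add_self

theorem succ_pow_le_factorial_mul_stirlingSecond_add (N a : ℕ) :
    (a + 1) ^ N ≤ (a + 1)! * stirlingSecond N (a + 1) + (a + 1) * a ^ N := by
  rw [← sum_stirlingSecond_mul_descFactorial N (a + 1), sum_range_succ, descFactorial_self,
    ← sum_stirlingSecond_mul_descFactorial N a, mul_sum, add_comm, mul_comm]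
  refine Nat.add_le_add_left (sum_le_sum fun j hj => ?_) _
  have hdesc := succ_descFactorial a j
  have hja : j ≤ a := Nat.lt_succ_iff.1 (mem_range.1 hj)
  calc stirlingSecond N j * (a + 1).descFactorial j
      ≤ stirlingSecond N j * ((a + 1 - j) * (a + 1).descFactorial j) := by
        gcongr; exact Nat.le_mul_of_pos_left _ (by omega)
    _ = (a + 1) * (stirlingSecond N j * a.descFactorial j) := by rw [hdesc]; ring

theorem two_mul_pow_self_le_succ_pow {a : ℕ} (ha : a ≠ 0) : 2 * a ^ a ≤ (a + 1) ^ a := by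
  have hq : (2 : ℚ) ≤ (1 + 1 / a) ^ a := by
    have := one_add_mul_le_pow (a := (1 / a : ℚ))
      (by linarith [show (0 : ℚ) ≤ 1 / a by positivity]) a
    rwa [mul_one_div_cancel (by exact_mod_cast ha), one_add_one_eq_two] at this
  have : (2 : ℚ) * a ^ a ≤ (a + 1) ^ a := by
    calc (2 : ℚ) * a ^ a ≤ (1 + 1 / a) ^ a * a ^ a := by gcongr
      _ = (a + 1) ^ a := by rw [← mul_pow]; congr 1; field_simp
  exact_mod_cast this

theorem mul_pow_le_succ_pow_of_pow_le_two_pow {a d g : ℕ} (ha : a ≠ 0) (hd : d ^ a ≤ 2 ^ g) :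
    d * a ^ (a + g) ≤ (a + 1) ^ (a + g) := by
  refine (pow_le_pow_iff_left₀ (by positivity) (by positivity) ha).1 ?_
  calc (d * a ^ (a + g)) ^ a = d ^ a * (a ^ a) ^ (a + g) := by
        rw [mul_pow, ← pow_mul, ← pow_mul, mul_comm a]
    _ ≤ 2 ^ (a + g) * (a ^ a) ^ (a + g) :=
        Nat.mul_le_mul_right _ (hd.trans (Nat.pow_le_pow_right two_pos le_add_self))
    _ = (2 * a ^ a) ^ (a + g) := (mul_pow _ _ _).symm
    _ ≤ ((a + 1) ^ a) ^ (a + g) := by gcongr; exact two_mul_pow_self_le_succ_pow ha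
    _ = ((a + 1) ^ (a + g)) ^ a := by rw [← pow_mul, ← pow_mul, mul_comm]

theorem mul_stirlingSecond_le_of_pow_le_two_pow {a c g : ℕ} (ha : a ≠ 0)
    (hc : (c + a) ^ a ≤ 2 ^ g) :
    c * stirlingSecond (a + g) a ≤ stirlingSecond (a + 1 + g) (a + 1) := by
  have hlow := succ_pow_le_factorial_mul_stirlingSecond_add (a + 1 + g) a
  have key : (a + 1)! * (c * stirlingSecond (a + g) a) + (a + 1) * a ^ (a + 1 + g)
      ≤ (a + 1) ^ (a + 1 + g) :=
    calc (a + 1)! * (c * stirlingSecond (a + g) a) + (a + 1) * a ^ (a + 1 + g)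
        = (a + 1) * (c * (a ! * stirlingSecond (a + g) a) + a * a ^ (a + g)) := by
          rw [factorial_succ]; ring
      _ ≤ (a + 1) * (c * a ^ (a + g) + a * a ^ (a + g)) := by
          gcongr; exact factorial_mul_stirlingSecond_le_pow _ _
      _ = (a + 1) * ((c + a) * a ^ (a + g)) := by ring
      _ ≤ (a + 1) * (a + 1) ^ (a + g) := by
          gcongr; exact mul_pow_le_succ_pow_of_pow_le_two_pow ha hc
      _ = (a + 1) ^ (a + 1 + g) := by ring
  have hmul : (a + 1)! * (c * stirlingSecond (a + g) a) ≤
      (a + 1)! * stirlingSecond (a + 1 + g) (a + 1) := by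
    omega
  exact Nat.le_of_mul_le_mul_left hmul (factorial_pos _)

end Nat

section Alternating

variable {R : Type*} [CommRing R] [LinearOrder R] [IsStrictOrderedRing R] {f : ℕ → R}

theorem sum_range_alternating_mem_Icc (hf : Antitone f) (hf₀ : ∀ i, 0 ≤ f i) (L : ℕ) :
    ∑ i ∈ range L, (-1) ^ i * f i ∈ Set.Icc 0 (f 0) := by
  induction L generalizing f with
  | zero => simpa using hf₀ 0
  | succ L ih =>
    obtain ⟨htail₀, htail⟩ := ih (f := fun i => f (i + 1)) (fun _ _ h => hf (by omega))
      (fun i => hf₀ _)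
    have hshift :
        ∑ i ∈ range (L + 1), (-1) ^ i * f i = f 0 - ∑ i ∈ range L, (-1) ^ i * f (i + 1) := by
      simp only [sum_range_succ', pow_succ, pow_zero, one_mul, mul_neg_one, neg_mul,
        sum_neg_distrib]
      ring
    have h10 : f 1 ≤ f 0 := hf zero_le_one
    constructor <;> linarith

theorem sum_Icc_alternating_le (hf : Antitone f) (hf₀ : ∀ i, 0 ≤ f i) {L : ℕ} (hL : 2 ≤ L) :
    ∑ j ∈ Icc 1 L, (-1) ^ (j - 1) * f j ≤ f 1 - f 2 + f 3 := by
  obtain ⟨M, rfl⟩ := Nat.exists_eq_add_of_le' hL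
  have hsplit : ∑ j ∈ Icc 1 (M + 2), (-1) ^ (j - 1) * f j
      = f 1 - f 2 + ∑ i ∈ range M, (-1) ^ i * f (i + 3) := by
    rw [← Ico_add_one_right_eq_Icc, sum_Ico_eq_sum_range, Nat.add_sub_cancel, sum_range_succ',
      sum_range_succ']
    simp only [add_comm, add_left_comm, Nat.reduceAdd, Nat.add_one_sub_one, pow_succ, mul_neg,
      mul_one, neg_neg, zero_add, pow_zero, neg_mul, one_mul, tsub_self]
    ring
  have htail := (sum_range_alternating_mem_Icc (f := fun i => f (i + 3))
    (fun _ _ h => hf (by omega)) (fun i => hf₀ _) M).2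
  rw [hsplit]
  linarith

end Alternating

section Growth

open Nat

variable {r g B : ℕ}

theorem mul_stirlingSecond_le_of_pow_le (hB : B ^ r ≤ 2 ^ g) {a c : ℕ} (ha : a ≠ 0) (har : a ≤ r)
    (hc : c + a ≤ B) : c * stirlingSecond (a + g) a ≤ stirlingSecond (a + 1 + g) (a + 1) := by
  refine mul_stirlingSecond_le_of_pow_le_two_pow ha ?_
  calc (c + a) ^ a ≤ B ^ a := Nat.pow_le_pow_left hc a
    _ ≤ B ^ r := Nat.pow_le_pow_right (by omega) har
    _ ≤ 2 ^ g := hB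

theorem antitone_choose_mul_stirlingSecond (hB : B ^ r ≤ 2 ^ g) (hrB : 2 * r ≤ B) :
    Antitone fun j => r.choose j * stirlingSecond (r + g - j) (r - j) := by
  refine antitone_nat_of_succ_le fun j => ?_
  rcases lt_trichotomy r (j + 1) with hlt | heq | hgt
  · simp [choose_eq_zero_of_lt hlt]
  · have hg : g ≠ 0 := by
      rintro rfl
      have : 2 ^ r ≤ 1 := (Nat.pow_le_pow_left (by omega) r).trans hB
      have : 1 < 2 ^ r := Nat.one_lt_two_pow (by omega)
      omega
    obtain ⟨g, rfl⟩ := exists_eq_succ_of_ne_zero hg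
    simp [show r + (g + 1) - (j + 1) = g + 1 by omega, show r - (j + 1) = 0 by omega]
  · obtain ⟨a, ha⟩ : ∃ a, r = j + 1 + a := ⟨r - (j + 1), by omega⟩
    have hchoose : r.choose (j + 1) ≤ r.choose j * r :=
      calc r.choose (j + 1) ≤ r.choose (j + 1) * (j + 1) := Nat.le_mul_of_pos_right _ j.succ_pos
        _ = r.choose j * (r - j) := choose_succ_right_eq r j
        _ ≤ r.choose j * r := Nat.mul_le_mul_left _ (Nat.sub_le r j)
    have hratio := mul_stirlingSecond_le_of_pow_le hB (a := a) (c := r) (by omega) (by omega)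
      (by omega)
    simp only [show r + g - (j + 1) = a + g by omega, show r - (j + 1) = a by omega,
      show r + g - j = a + 1 + g by omega, show r - j = a + 1 by omega]
    calc r.choose (j + 1) * stirlingSecond (a + g) a
        ≤ r.choose j * r * stirlingSecond (a + g) a := Nat.mul_le_mul_right _ hchoose
      _ = r.choose j * (r * stirlingSecond (a + g) a) := Nat.mul_assoc _ _ _
      _ ≤ r.choose j * stirlingSecond (a + 1 + g) (a + 1) := Nat.mul_le_mul_left _ hratio

theorem sum_alternating_choose_mul_stirlingSecond_le (hr : 2 ≤ r)
    (hB : B ^ r ≤ 2 ^ g) (hrB : 2 * r ≤ B) :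
    ∑ j ∈ Icc 1 r, (-1 : ℤ) ^ (j - 1) * r.choose j * stirlingSecond (r + g - j) (r - j) ≤
      r * stirlingSecond (r + g - 1) (r - 1) - r.choose 2 * stirlingSecond (r + g - 2) (r - 2) +
        r.choose 3 * stirlingSecond (r + g - 3) (r - 3) := by
  have hu := Nat.mono_cast (α := ℤ) |>.comp_antitone (antitone_choose_mul_stirlingSecond hB hrB)
  refine le_of_eq_of_le (sum_congr rfl fun j _ => ?_)
    ((sum_Icc_alternating_le hu (fun _ => Int.natCast_nonneg _) hr).trans_eq ?_)
  · simp [mul_assoc]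
  · simp

theorem sum_alternating_choose_mul_stirlingSecond_add_lt {t : ℕ} (hr : 3 ≤ r) (hrt : r ≤ t + 2)
    (hexc : (r, t) ≠ (3, 1)) (hB : ((t + 1) * (r + 1)) ^ r ≤ 2 ^ g) :
    ∑ j ∈ Icc 1 r, (-1 : ℤ) ^ (j - 1) * r.choose j * stirlingSecond (r + g - j) (r - j) + t <
      (t + 2) * stirlingSecond (r + g - 1) (r - 1) -
        (t + 1) * stirlingSecond (r + g - 2) (r - 2) := by
  have hrB : 2 * r ≤ (t + 1) * (r + 1) := by nlinarith
  have hsum := sum_alternating_choose_mul_stirlingSecond_le (by omega) hB hrB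
  have hA₂ : 1 ≤ stirlingSecond (r + g - 2) (r - 2) := stirlingSecond_pos (by omega) (by omega)
  rcases hrt.lt_or_eq with hlt | heq
  · have hA₁₂ := mul_stirlingSecond_le_of_pow_le hB (a := r - 2) (c := 2 * t + 2) (by omega)
      (by omega) (by have := Nat.sub_add_cancel (show 2 ≤ r by omega); nlinarith)
    rw [show r - 2 + g = r + g - 2 by omega, show r - 2 + 1 + g = r + g - 1 by omega,
      show r - 2 + 1 = r - 1 by omega] at hA₁₂
    have hA₃₂ : r.choose 3 * stirlingSecond (r + g - 3) (r - 3) ≤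
        r.choose 2 * stirlingSecond (r + g - 2) (r - 2) :=
      antitone_choose_mul_stirlingSecond hB hrB (show 2 ≤ 3 by norm_num)
    have hr' : r ≤ t + 1 := by omega
    zify at hA₁₂ hA₃₂ hA₂ hr'
    nlinarith
  · have hr₄ : 4 ≤ r := by
      by_contra h
      exact hexc (Prod.ext (by omega) (by simp only; omega))
    have hA₂₃ := mul_stirlingSecond_le_of_pow_le hB (a := r - 3) (c := r) (by omega) (by omega)
      (by omega)
    rw [show r - 3 + g = r + g - 3 by omega, show r - 3 + 1 + g = r + g - 2 by omega,
      show r - 3 + 1 = r - 2 by omega] at hA₂₃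
    have hA₃ : 1 ≤ stirlingSecond (r + g - 3) (r - 3) := stirlingSecond_pos (by omega) (by omega)
    have hr₁ : r - 1 + 1 = r := by omega
    have hC₂ : r.choose 2 = r - 1 + (r - 1).choose 2 := by
      simpa only [hr₁, choose_one_right] using choose_succ_succ' (r - 1) 1
    have hC₃ : r * (r - 1).choose 2 = r.choose 3 * 3 := by
      simpa only [hr₁] using add_one_mul_choose_eq (r - 1) 2
    have hC₃r : r * 3 ≤ r * (r - 1).choose 2 :=
      Nat.mul_le_mul_left r (choose_le_choose 2 (show 3 ≤ r - 1 by omega))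
    have ht : t + 1 = r - 1 := by omega
    zify [show 1 ≤ r by omega] at hA₂₃ hA₃ hC₂ hC₃ hC₃r ht
    nlinarith [mul_le_mul_of_nonneg_left hA₂₃ (by positivity : (0 : ℤ) ≤ (r - 1).choose 2)]

end Growth

theorem pow_le_two_pow_of_mul_logb_le {x e N : ℕ} (hx : x ≠ 0) (h : e * Real.logb 2 x ≤ N) :
    x ^ e ≤ 2 ^ N := by
  have hlog : (e : ℝ) * Real.log x ≤ N * Real.log 2 := by
    rwa [Real.logb, mul_div_assoc', div_le_iff₀ (Real.log_pos one_lt_two)] at h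
  have : ((x ^ e : ℕ) : ℝ) ≤ ((2 ^ N : ℕ) : ℝ) := by
    push_cast
    rw [← Real.log_le_log_iff (by positivity) (by positivity), Real.log_pow, Real.log_pow]
    exact hlog
  exact_mod_cast this

theorem le_and_pow_le_two_pow_of_two_mul_Lkt_le {k t n : ℕ} (htk : t ≤ k) (hkt : k ≤ 2 * t + 2)
    (hn : 2 * Lkt k t ≤ n) : k ≤ n ∧ ((t + 1) * (k - t + 1)) ^ (k - t) ≤ 2 ^ (n - k) := by
  have hL : Lkt k t = t + 1 + ((k - t : ℕ) + 1) * Real.logb 2 ((t + 1) * (k - t + 1) : ℕ) := by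
    simp [Lkt, Nat.cast_sub htk]
  have hlog : 0 ≤ Real.logb 2 ((t + 1) * (k - t + 1) : ℕ) :=
    Real.logb_nonneg one_lt_two (by norm_cast; nlinarith)
  have hkt' : (k : ℝ) ≤ 2 * t + 2 := by exact_mod_cast hkt
  have hkn : k ≤ n := by
    have : (k : ℝ) ≤ n := by rw [hL] at hn; nlinarith
    exact_mod_cast this
  refine ⟨hkn, pow_le_two_pow_of_mul_logb_le (by positivity) ?_⟩
  rw [hL, Nat.cast_sub htk] at hn
  rw [Nat.cast_sub hkn, Nat.cast_sub htk]
  nlinarith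

theorem stmt_19_general (k t n : ℕ) (hk₁ : t + 3 ≤ k) (hk₂ : k ≤ 2 * t + 2)
    (hkt : (k, t) ≠ (4, 1)) (hn : (n : ℝ) ≥ 2 * Lkt k t) :
    (((t : ℤ) + 2) * stirling (n - t - 1) (k - t - 1) -
        ((t : ℤ) + 1) * stirling (n - t - 2) (k - t - 2) >
      (∑ j ∈ Finset.Icc 1 (k - t),
        (-1 : ℤ) ^ (j - 1) * Nat.choose (k - t) j * stirling (n - t - j) (k - t - j)) + t) ∧
    (∀ m : ℕ, (m : ℝ) ≥ 2 * Lkt 4 1 →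
      ((1 : ℤ) + 2) * stirling (m - 1 - 1) (4 - 1 - 1) -
          ((1 : ℤ) + 1) * stirling (m - 1 - 2) (4 - 1 - 2) =
        (∑ j ∈ Finset.Icc 1 (4 - 1),
          (-1 : ℤ) ^ (j - 1) * Nat.choose (4 - 1) j * stirling (m - 1 - j) (4 - 1 - j)) + 1 ∧
      ((1 : ℤ) + 2) * stirling (m - 1 - 1) (4 - 1 - 1) -
          ((1 : ℤ) + 1) * stirling (m - 1 - 2) (4 - 1 - 2) =
        3 * stirling (m - 2) 2 - 2) := by
  rw [stirling_eq_stirlingSecond]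
  refine ⟨?_, fun m hm => ?_⟩
  · obtain ⟨hkn, hB⟩ := le_and_pow_le_two_pow_of_two_mul_Lkt_le (by omega) hk₂ hn
    have hsub : ∀ j, n - t - j = k - t + (n - k) - j := fun j => by omega
    simp only [hsub]
    exact sum_alternating_choose_mul_stirlingSecond_add_lt (by omega) (by omega)
      (fun h => hkt (by simp only [Prod.mk.injEq] at h ⊢; omega)) hB
  · obtain ⟨hm, hB⟩ := le_and_pow_le_two_pow_of_two_mul_Lkt_le (by norm_num) (by norm_num) hm
    have hm₄ : m ≠ 4 := by rintro rfl; norm_num at hB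
    obtain ⟨m, rfl⟩ : ∃ m', m = m' + 5 := ⟨m - 5, by omega⟩
    simp [sum_Icc_succ_top, Nat.stirlingSecond_one_right, sub_eq_add_neg, add_assoc]

theorem stmt_19 (k t n : ℕ) (ht : 1 ≤ t) (hk₁ : t + 3 ≤ k) (hk₂ : k ≤ 2 * t + 2)
    (hkt : (k, t) ≠ (4, 1)) (hn : (n : ℝ) ≥ 2 * Lkt k t) :
    (((t : ℤ) + 2) * stirling (n - t - 1) (k - t - 1) -
        ((t : ℤ) + 1) * stirling (n - t - 2) (k - t - 2) >
      (∑ j ∈ Finset.Icc 1 (k - t),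
        (-1 : ℤ) ^ (j - 1) * Nat.choose (k - t) j * stirling (n - t - j) (k - t - j)) + t) ∧
    (∀ m : ℕ, (m : ℝ) ≥ 2 * Lkt 4 1 →
      ((1 : ℤ) + 2) * stirling (m - 1 - 1) (4 - 1 - 1) -
          ((1 : ℤ) + 1) * stirling (m - 1 - 2) (4 - 1 - 2) =
        (∑ j ∈ Finset.Icc 1 (4 - 1),
          (-1 : ℤ) ^ (j - 1) * Nat.choose (4 - 1) j * stirling (m - 1 - j) (4 - 1 - j)) + 1 ∧
      ((1 : ℤ) + 2) * stirling (m - 1 - 1) (4 - 1 - 1) -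
          ((1 : ℤ) + 1) * stirling (m - 1 - 2) (4 - 1 - 2) =
        3 * stirling (m - 2) 2 - 2) :=
  stmt_19_general k t n hk₁ hk₂ hkt hn
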